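/- Let m₀ : ℂ_+ → ℂ_+ satisfy the equation 1 + z·m₀(z) + m₀(z)² + Q(m₀(z)) = 0 for all z ∈ ℂ_+, where Q is a fixed polynomial. For t ≥ 0 define m_t : ℂ_+ → ℂ_+ implicitly by e^{−t/2} m_t(z) = m₀(ξ_t(z)) with ξ_t(z) = e^{t/2} z + e^{t/2}(1 − e^{−t}) m_t(z). Then m_t satisfies 1 + z·m_t(z) + m_t(z)² + Q(e^{−t/2} m_t(z)) = 0. -/
import Mathlib


/-- If `m₀` solves `1 + z m + m² + Q(m) = 0` on the upper half plane and `m_t` satisfies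
the free-convolution subordination relations, then `m_t` solves the modified equation
`1 + z m_t + m_t² + Q(e^{-t/2} m_t) = 0`. -/
theorem subordination_selfconsistent (Q : Polynomial ℂ) (m₀ mt : ℂ → ℂ) (t : ℝ) (ht : 0 ≤ t)
    (hm₀map : ∀ z : ℂ, 0 < z.im → 0 < (m₀ z).im)
    (hmtmap : ∀ z : ℂ, 0 < z.im → 0 < (mt z).im)
    (hm₀ : ∀ z : ℂ, 0 < z.im → 1 + z * m₀ z + (m₀ z) ^ 2 + Q.eval (m₀ z) = 0)
    (hsub : ∀ z : ℂ, 0 < z.im →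
      (Real.exp (-t / 2) : ℂ) * mt z
        = m₀ ((Real.exp (t / 2) : ℂ) * z
            + (Real.exp (t / 2) : ℂ) * (1 - (Real.exp (-t) : ℂ)) * mt z)) :
    ∀ z : ℂ, 0 < z.im →
      1 + z * mt z + (mt z) ^ 2 + Q.eval ((Real.exp (-t / 2) : ℂ) * mt z) = 0 := by
  intro z hz
  set ξ : ℂ := (Real.exp (t / 2) : ℂ) * z
      + (Real.exp (t / 2) : ℂ) * (1 - (Real.exp (-t) : ℂ)) * mt z with hξ
  have himeq : ξ.im = Real.exp (t / 2) * z.im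
      + Real.exp (t / 2) * (1 - Real.exp (-t)) * (mt z).im := by
    simp only [hξ, Complex.add_im, Complex.mul_im, Complex.mul_re, Complex.sub_im,
      Complex.sub_re, Complex.one_re, Complex.one_im, Complex.ofReal_re, Complex.ofReal_im]
    ring
  have him : 0 < ξ.im := by
    rw [himeq]
    have h1 : 0 < Real.exp (t / 2) * z.im := by positivity
    have h2 : 0 ≤ Real.exp (t / 2) * (1 - Real.exp (-t)) * (mt z).im := by
      have he : Real.exp (-t) ≤ 1 := Real.exp_le_one_iff.mpr (by linarith)
      exact mul_nonneg (mul_nonneg (Real.exp_pos _).le (by linarith)) (hmtmap z hz).le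
    linarith
  have key := hm₀ ξ him
  rw [← hsub z hz] at key
  have h1 : (Real.exp (t / 2) : ℂ) * (Real.exp (-t / 2) : ℂ) = 1 := by
    rw [← Complex.ofReal_mul, ← Real.exp_add]
    norm_num [show t / 2 + -t / 2 = 0 by ring]
  have h2 : ((Real.exp (-t / 2) : ℂ)) ^ 2 = (Real.exp (-t) : ℂ) := by
    rw [← Complex.ofReal_pow]
    exact Complex.ofReal_inj.mpr (by rw [← Real.exp_nat_mul]; norm_num; ring_nf)
  rw [hξ] at key
  linear_combination key - (z * mt z + (1 - (Real.exp (-t) : ℂ)) * (mt z) ^ 2) * h1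
    - (mt z) ^ 2 * h2
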